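/- Let (M, J, g) be a metallic pseudo-Riemannian manifold and ∇ a torsion-free connection with (∇, g) Codazzi-coupled. Then (Φ_J g)(X,Y,Z) + (Φ_J g)(Y,Z,X) + (Φ_J g)(Z,X,Y) = g((∇_X J)Y, Z) + g((∇_Y J)Z, X) + g((∇_Z J)X, Y). -/

import Mathlib

variable {A : Type*} [CommRing A] [Algebra ℝ A]
variable {V : Type*} [AddCommGroup V] [Module ℝ V] [Module A V] [IsScalarTower ℝ A V]

/-- Covariant derivative `(D_X T) Y` of a (1,1)-tensor field `T`. -/
def covT (D : V → V → V) (T : V → V) (X Y : V) : V := D X (T Y) - T (D X Y)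

/-- `covM Dact D h X Y Z = (D_Z h)(X,Y)`, the covariant derivative of a
(0,2)-tensor field `h`, where `Dact` is the action of vector fields on functions. -/
def covM (Dact : V → A → A) (D : V → V → V) (h : V → V → A) (X Y Z : V) : A :=
  Dact Z (h X Y) - h (D Z X) Y - h X (D Z Y)

/-- Tachibana operator (Φ_T g)(X,Y,Z) applied to the metric g, where
(L_X T)Y = [X,TY] − T[X,Y]. -/
def tachi (Dact : V → A → A) (bracket : V → V → V) (g : V → V → A)
    (T : V → V) (X Y Z : V) : A :=
  Dact (T X) (g Y Z) - Dact X (g (T Y) Z)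
    + g (bracket Y (T X) - T (bracket Y X)) Z
    + g Y (bracket Z (T X) - T (bracket Z X))

/-!
For torsion-free `∇` the Lie derivatives are `(L_Y J)X = (∇_Y J)X - ∇_{JX} Y + J ∇_X Y`, and with
`g` symmetric and `J` `g`-symmetric this gives
`(Φ_J g)(X,Y,Z) = (∇_{JX} g)(Y,Z) - (∇_X g)(Y,JZ) + g((∇_Y J)X, Z) + g((∇_Z J)X, Y) - g((∇_X J)Z, Y)`.
In the cyclic sum the first and last `∇J` terms telescope, and Codazzi coupling
`(∇_X g)(Y,JZ) = (∇_{JZ} g)(X,Y)` cancels each `∇g` term against one from the next summand.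
-/

omit [Algebra ℝ A] [Module ℝ V] [IsScalarTower ℝ A V] in
theorem tachi_eq_covM_add_covT (Dact : V → A → A) (bracket D : V → V → V)
    (g : V →ₗ[A] V →ₗ[A] A) (J : V →ₗ[A] V) (hsym : ∀ X Y, g X Y = g Y X)
    (hJsym : ∀ X Y, g (J X) Y = g X (J Y)) (htf : ∀ X Y, D X Y - D Y X = bracket X Y)
    (X Y Z : V) :
    tachi Dact bracket (fun a b => g a b) J X Y Z
      = covM Dact D (fun a b => g a b) Y Z (J X) - covM Dact D (fun a b => g a b) Y (J Z) X
        + g (covT D J Y X) Z + g (covT D J Z X) Y - g (covT D J X Z) Y := by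
  simp only [tachi, covT, covM, ← htf, map_sub, LinearMap.sub_apply]
  rw [hJsym Y Z]
  linear_combination hJsym (D X Y) Z + hsym Y (D Z (J X)) - hsym Y (J (D Z X))
    + hsym Y (J (D X Z)) - hsym Y (D X (J Z))

theorem tachibana_cyclic_sum_general
    (Dact : V → A → A) (bracket D : V → V → V)
    (g : V →ₗ[A] V →ₗ[A] A) (J : V →ₗ[A] V)
    (hsym : ∀ X Y, g X Y = g Y X)
    (hJsym : ∀ X Y, g (J X) Y = g X (J Y))
    (htf : ∀ X Y, D X Y - D Y X = bracket X Y)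
    (hCodg : ∀ X Y Z, covM Dact D (fun a b => g a b) Y Z X
      = covM Dact D (fun a b => g a b) X Y Z) :
    ∀ X Y Z, tachi Dact bracket (fun a b => g a b) (⇑J) X Y Z
        + tachi Dact bracket (fun a b => g a b) (⇑J) Y Z X
        + tachi Dact bracket (fun a b => g a b) (⇑J) Z X Y
      = g (covT D (⇑J) X Y) Z + g (covT D (⇑J) Y Z) X + g (covT D (⇑J) Z X) Y := by
  intro X Y Z
  simp only [tachi_eq_covM_add_covT Dact bracket D g J hsym hJsym htf]
  linear_combination -hCodg X Y (J Z) - hCodg Y Z (J X) - hCodg Z X (J Y)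

/-- cyclic sum of the Tachibana operator for a torsion-free ∇
with (∇,g) Codazzi-coupled. -/
theorem tachibana_cyclic_sum
    (Dact : V → A → A) (bracket D : V → V → V)
    (g : V →ₗ[A] V →ₗ[A] A) (J : V →ₗ[A] V) (p q : ℝ)
    (hsym : ∀ X Y, g X Y = g Y X)
    (hJsym : ∀ X Y, g (J X) Y = g X (J Y))
    (hJ2 : ∀ X, J (J X) = p • J X + q • X)
    (htf : ∀ X Y, D X Y - D Y X = bracket X Y)
    (hCodg : ∀ X Y Z, covM Dact D (fun a b => g a b) Y Z X
      = covM Dact D (fun a b => g a b) X Y Z) :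
    ∀ X Y Z, tachi Dact bracket (fun a b => g a b) (⇑J) X Y Z
        + tachi Dact bracket (fun a b => g a b) (⇑J) Y Z X
        + tachi Dact bracket (fun a b => g a b) (⇑J) Z X Y
      = g (covT D (⇑J) X Y) Z + g (covT D (⇑J) Y Z) X + g (covT D (⇑J) Z X) Y :=
  tachibana_cyclic_sum_general Dact bracket D g J hsym hJsym htf hCodg
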